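/- arXiv:0805.0094 — 2 statements merged into one kernel-verified Lean document; each statement's English description precedes it below -/
import Mathlib

section
/- Let m ≥ 1 be an integer, set N = 2m+1 and ζ = exp(πi/(2N)) ∈ ℂ, and for 0 ≤ j ≤ m set s(j) = ∏_{i=1}^{j} (sin(iπ/N)/sin(π/N)) (so s(0) = 1). Then the function A ↦ [ (([m]!_A)^{12} / ([2m]!_A)^6) · Σ_{z=3m}^{4m} (−1)^z · [z+1]!_A / ( ([4m−z]!_A)^3 · ([z−3m]!_A)^4 ) ] / [2m+1]_A tends, as A tends to ζ within the set {A ∈ ℂ : A ≠ 0 and A^(2j) ≠ A^(−2j) for every integer j with 1 ≤ j ≤ 4m+1}, to the real number Σ_{k=0}^{m} ( s(m) / (s(k)·s(m−k)) )^4 (regarded as a complex number). -/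
/-!
At `ζ = exp(πi/(2N))`, `N = 2m+1`, the quantum integer `[j]` is the real number
`sin(jπ/N)/sin(π/N)`. In particular `[N]_ζ = 0`, and `[N]` divides every `[z+1]!` with `z ≥ 3m`,
so `[z+1]! = [2m]! · [N] · ∏_{N<j≤z+1} [j]` cancels the denominator `[N]` exactly and leaves a
function of `A` that is continuous at `ζ`. Its value there follows from the two symmetries
`sin((N-j)π/N) = sin(jπ/N)` and `sin((N+j)π/N) = -sin(jπ/N)`: they give `s(a) s(b) = s(2m)`
whenever `a + b = 2m`, and `∏_{N<j≤N+n} [j]_ζ = (-1)^n s(n)`, after which the `z = 3m+k` term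
collapses to `(s(m)/(s(k) s(m-k)))^4`.
-/

open Complex Filter

/-- The quantum integer `[m]_A = (A^(2m) − A^(−2m))/(A^2 − A^(−2))`. -/
noncomputable def qint (A : ℂ) (m : ℕ) : ℂ :=
  (A ^ (2 * m : ℤ) - A ^ (-(2 * m : ℤ))) / (A ^ (2 : ℤ) - A ^ (-2 : ℤ))

/-- The quantum factorial `[m]!_A = ∏_{j=1}^m [j]_A`. -/
noncomputable def qfact (A : ℂ) (m : ℕ) : ℂ :=
  ∏ j ∈ Finset.Icc 1 m, qint A j

open Finset

lemma Finset.prod_Icc_one_mul_prod_Ioc {M : Type*} [CommMonoid M] (f : ℕ → M) {n k : ℕ}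
    (h : n ≤ k) : (∏ j ∈ Icc 1 n, f j) * ∏ j ∈ Ioc n k, f j = ∏ j ∈ Icc 1 k, f j := by
  have hIcc (n : ℕ) : Icc 1 n = Ioc 0 n := Icc_add_one_left_eq_Ioc 0 n
  rw [hIcc, hIcc]
  exact prod_Ioc_consecutive f (Nat.zero_le n) h

lemma Real.sin_nat_mul_pi_div_pos {i N : ℕ} (hi : 0 < i) (hiN : i < N) :
    0 < Real.sin (i * Real.pi / N) := by
  have hN : (0 : ℝ) < N := by exact_mod_cast hi.trans hiN
  apply Real.sin_pos_of_pos_of_lt_pi (by positivity)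
  rw [div_lt_iff₀ hN, mul_comm]
  exact mul_lt_mul_of_pos_left (by exact_mod_cast hiN) Real.pi_pos

noncomputable def sinRatio (N j : ℕ) : ℝ :=
  Real.sin (j * Real.pi / N) / Real.sin (Real.pi / N)

noncomputable def sinRatioProd (N n : ℕ) : ℝ :=
  ∏ j ∈ Icc 1 n, sinRatio N j

section sinRatio

variable {N : ℕ}

lemma sinRatio_pos {j : ℕ} (hj : 0 < j) (hjN : j < N) : 0 < sinRatio N j := by
  have h1 := Real.sin_nat_mul_pi_div_pos (i := 1) (N := N) one_pos (by omega)
  rw [Nat.cast_one, one_mul] at h1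
  exact div_pos (Real.sin_nat_mul_pi_div_pos hj hjN) h1

lemma sinRatio_sub {t : ℕ} (ht : t ≤ N) : sinRatio N (N - t) = sinRatio N t := by
  obtain rfl | hN := N.eq_zero_or_pos
  · rw [Nat.le_zero.1 ht]
  have : ((N - t : ℕ) : ℝ) * Real.pi / N = Real.pi - t * Real.pi / N := by
    rw [Nat.cast_sub ht]; field_simp
  rw [sinRatio, sinRatio, this, Real.sin_pi_sub]

lemma sinRatio_add (t : ℕ) : sinRatio N (N + t) = -sinRatio N t := by
  obtain rfl | hN := N.eq_zero_or_pos
  · simp [sinRatio]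
  have : ((N + t : ℕ) : ℝ) * Real.pi / N = t * Real.pi / N + Real.pi := by
    push_cast; field_simp; ring
  rw [sinRatio, sinRatio, this, Real.sin_add_pi, neg_div]

lemma sinRatioProd_pos {n : ℕ} (hn : n < N) : 0 < sinRatioProd N n :=
  prod_pos fun j hj => sinRatio_pos (mem_Icc.1 hj).1 (by grind)

lemma sinRatioProd_succ (n : ℕ) :
    sinRatioProd N (n + 1) = sinRatioProd N n * sinRatio N (n + 1) :=
  prod_Icc_succ_top (by omega) _

lemma sinRatioProd_mul_sinRatioProd {a b : ℕ} (h : a + b + 1 = N) :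
    sinRatioProd N a * sinRatioProd N b = sinRatioProd N (a + b) := by
  have hreflect : ∏ j ∈ Ioc a (a + b), sinRatio N j = sinRatioProd N b := by
    refine prod_nbij' (N - ·) (N - ·) ?_ ?_ ?_ ?_ ?_ <;> intro j hj <;>
      simp only [mem_Ioc, mem_Icc] at hj ⊢
    any_goals omega
    exact (sinRatio_sub (by omega)).symm
  rw [← hreflect, sinRatioProd, sinRatioProd]
  exact prod_Icc_one_mul_prod_Ioc _ (Nat.le_add_right a b)

lemma prod_Ioc_sinRatio (n : ℕ) :
    ∏ j ∈ Ioc N (N + n), sinRatio N j = (-1) ^ n * sinRatioProd N n := by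
  induction n with
  | zero => simp [sinRatioProd]
  | succ n ih =>
    rw [← add_assoc, prod_Ioc_succ_top (by omega), ih, add_assoc, sinRatio_add,
      sinRatioProd_succ]
    ring

end sinRatio

lemma exp_mul_I_zpow_sub_zpow_neg (θ : ℂ) (n : ℤ) :
    exp (θ * I) ^ n - exp (θ * I) ^ (-n) = 2 * sin (n * θ) * I := by
  have hpow (k : ℤ) : exp (θ * I) ^ k = exp (k * θ * I) := by rw [← exp_int_mul, mul_assoc]
  rw [hpow, hpow, Int.cast_neg, neg_mul, exp_mul_I, exp_mul_I, cos_neg, sin_neg]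
  ring

lemma qint_exp_mul_I (θ : ℂ) (j : ℕ) :
    qint (exp (θ * I)) j = sin (2 * j * θ) / sin (2 * θ) := by
  rw [qint, exp_mul_I_zpow_sub_zpow_neg, exp_mul_I_zpow_sub_zpow_neg, mul_right_comm,
    mul_right_comm 2, mul_div_mul_right _ _ I_ne_zero, mul_div_mul_left _ _ two_ne_zero]
  push_cast
  rfl

lemma qint_exp_pi_div (N j : ℕ) :
    qint (exp (↑(Real.pi / (2 * N)) * I)) j = sinRatio N j := by
  have hnum : 2 * (j : ℂ) * ↑(Real.pi / (2 * N)) = ↑(j * Real.pi / N) := by push_cast; ring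
  have hden : 2 * (↑(Real.pi / (2 * N)) : ℂ) = ↑(Real.pi / N) := by push_cast; ring
  rw [qint_exp_mul_I, hnum, hden, ← ofReal_sin, ← ofReal_sin, ← ofReal_div, sinRatio]

lemma qfact_exp_pi_div (N n : ℕ) :
    qfact (exp (↑(Real.pi / (2 * N)) * I)) n = sinRatioProd N n := by
  rw [qfact, sinRatioProd, ofReal_prod]
  exact prod_congr rfl fun j _ => qint_exp_pi_div N j

section qint

variable {A : ℂ}

lemma qint_ne_zero {j : ℕ} (h2 : A ^ (2 : ℤ) ≠ A ^ (-2 : ℤ))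
    (hj : A ^ (2 * j : ℤ) ≠ A ^ (-(2 * j : ℤ))) : qint A j ≠ 0 :=
  div_ne_zero (sub_ne_zero.2 hj) (sub_ne_zero.2 h2)

lemma zpow_two_ne_zpow_neg_two_of_qint_ne_zero {j : ℕ} (h : qint A j ≠ 0) :
    A ^ (2 : ℤ) ≠ A ^ (-2 : ℤ) :=
  fun h2 => h (by rw [qint, h2, sub_self, div_zero])

lemma continuousAt_qint (hA : A ≠ 0) (h2 : A ^ (2 : ℤ) ≠ A ^ (-2 : ℤ)) (j : ℕ) :
    ContinuousAt (qint · j) A := by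
  have hzpow (k : ℤ) := continuousAt_zpow₀ A k (Or.inl hA)
  exact ((hzpow _).sub (hzpow _)).div ((hzpow _).sub (hzpow _)) (sub_ne_zero.2 h2)

lemma continuousAt_prod_qint (hA : A ≠ 0) (h2 : A ^ (2 : ℤ) ≠ A ^ (-2 : ℤ)) (s : Finset ℕ) :
    ContinuousAt (fun A => ∏ j ∈ s, qint A j) A :=
  tendsto_finsetProd s fun j _ => continuousAt_qint hA h2 j

lemma qfact_succ (n : ℕ) : qfact A (n + 1) = qfact A n * qint A (n + 1) :=
  prod_Icc_succ_top (by omega) _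

lemma qfact_mul_prod_Ioc {n k : ℕ} (h : n ≤ k) :
    qfact A n * ∏ j ∈ Ioc n k, qint A j = qfact A k :=
  prod_Icc_one_mul_prod_Ioc _ h

end qint

noncomputable def sixj (m : ℕ) (A : ℂ) : ℂ :=
  qfact A m ^ 12 / qfact A (2 * m) ^ 6 *
    ∑ z ∈ Icc (3 * m) (4 * m),
      (-1 : ℂ) ^ z * qfact A (z + 1) / (qfact A (4 * m - z) ^ 3 * qfact A (z - 3 * m) ^ 4)

noncomputable def sixjReduced (m : ℕ) (A : ℂ) : ℂ :=
  qfact A m ^ 12 / qfact A (2 * m) ^ 6 *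
    ∑ z ∈ Icc (3 * m) (4 * m),
      (-1 : ℂ) ^ z * (qfact A (2 * m) * ∏ j ∈ Ioc (2 * m + 1) (z + 1), qint A j) /
        (qfact A (4 * m - z) ^ 3 * qfact A (z - 3 * m) ^ 4)

lemma sixj_eq_qint_mul_sixjReduced (m : ℕ) (A : ℂ) :
    sixj m A = qint A (2 * m + 1) * sixjReduced m A := by
  rw [sixj, sixjReduced, mul_sum, mul_sum, mul_sum]
  refine sum_congr rfl fun z hz => ?_
  have hz : 2 * m + 1 ≤ z + 1 := by grind
  rw [← qfact_mul_prod_Ioc hz, qfact_succ]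
  ring

lemma continuousAt_sixjReduced {m : ℕ} {A : ℂ} (hA : A ≠ 0) (h2 : A ^ (2 : ℤ) ≠ A ^ (-2 : ℤ))
    (hfact : ∀ j ≤ 2 * m, qfact A j ≠ 0) : ContinuousAt (sixjReduced m) A := by
  have hq (n : ℕ) : ContinuousAt (qfact · n) A := continuousAt_prod_qint hA h2 _
  refine (((hq m).pow 12).div ((hq _).pow 6) (pow_ne_zero _ (hfact _ le_rfl))).mul
    (tendsto_finsetSum _ fun z hz => ?_)
  have hz := mem_Icc.1 hz
  exact (continuousAt_const.mul ((hq _).mul (continuousAt_prod_qint hA h2 _))).div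
    (((hq _).pow 3).mul ((hq _).pow 4))
    (mul_ne_zero (pow_ne_zero _ (hfact _ (by omega))) (pow_ne_zero _ (hfact _ (by omega))))

lemma sixjReduced_exp_pi_div (m : ℕ) :
    sixjReduced m (exp (↑(Real.pi / (2 * (2 * m + 1 : ℕ))) * I)) =
      ↑(∑ k ∈ range (m + 1), (sinRatioProd (2 * m + 1) m /
        (sinRatioProd (2 * m + 1) k * sinRatioProd (2 * m + 1) (m - k))) ^ 4) := by
  rw [sixjReduced, ← Ico_add_one_right_eq_Icc, sum_Ico_eq_sum_range,
    show 4 * m + 1 - 3 * m = m + 1 by omega, mul_sum, ofReal_sum]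
  set N := 2 * m + 1
  refine sum_congr rfl fun k hk => ?_
  have hk : k ≤ m := Nat.lt_succ_iff.1 (mem_range.1 hk)
  rw [show 4 * m - (3 * m + k) = m - k by omega, show 3 * m + k - 3 * m = k by omega,
    show 3 * m + k + 1 = N + (m + k) by omega]
  simp only [qfact_exp_pi_div, qint_exp_pi_div, ← ofReal_prod, prod_Ioc_sinRatio]
  set a := sinRatioProd N m
  set b := sinRatioProd N k
  set c := sinRatioProd N (m - k)
  set e := sinRatioProd N (2 * m)
  have hsq : a * a = e := by rw [sinRatioProd_mul_sinRatioProd (by omega), ← two_mul]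
  have hsplit : sinRatioProd N (m + k) * c = e := by
    rw [sinRatioProd_mul_sinRatioProd (by omega), show m + k + (m - k) = 2 * m by omega]
  have hsign : (-1 : ℝ) ^ (3 * m + k) * (-1) ^ (m + k) = 1 := by
    rw [← pow_add]
    exact Even.neg_one_pow ⟨2 * m + k, by ring⟩
  have ha0 : a ≠ 0 := (sinRatioProd_pos (by omega)).ne'
  have hb0 : b ≠ 0 := (sinRatioProd_pos (by omega)).ne'
  have hc0 : c ≠ 0 := (sinRatioProd_pos (by omega)).ne'
  have hreal : a ^ 12 / e ^ 6 * ((-1) ^ (3 * m + k) * (e * ((-1) ^ (m + k) *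
      sinRatioProd N (m + k))) / (c ^ 3 * b ^ 4)) = (a / (b * c)) ^ 4 := by
    rw [← hsq] at hsplit ⊢
    field_simp
    linear_combination sinRatioProd N (m + k) * c * hsign + hsplit
  exact_mod_cast hreal

/-- For `N = 2m+1`, the Masbaum–Vogel six-j symbol with all edges colored `N`,
divided by `[N]_A`, tends as `A → exp(πi/(2N))` (within the set of nonzero `A`
with `A^(2j) ≠ A^(−2j)` for `1 ≤ j ≤ 4m+1`) to
`sixj_N = Σ_{k=0}^{m} ( s(m)/(s(k)·s(m−k)) )^4` where
`s(j) = ∏_{i=1}^{j} sin(iπ/N)/sin(π/N)`. -/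
theorem sixj_ratio_tendsto (m : ℕ) (hm : 1 ≤ m)
    (s : ℕ → ℝ)
    (hs : ∀ j : ℕ, j ≤ m →
      s j = ∏ i ∈ Finset.Icc 1 j,
        Real.sin (i * Real.pi / (2 * m + 1)) / Real.sin (Real.pi / (2 * m + 1))) :
    Tendsto
      (fun A : ℂ =>
        ((qfact A m) ^ 12 / (qfact A (2 * m)) ^ 6 *
            ∑ z ∈ Finset.Icc (3 * m) (4 * m),
              (-1 : ℂ) ^ z * qfact A (z + 1) /
                ((qfact A (4 * m - z)) ^ 3 * (qfact A (z - 3 * m)) ^ 4)) /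
          qint A (2 * m + 1))
      (nhdsWithin (Complex.exp (Real.pi * Complex.I / (2 * (2 * m + 1))))
        {A : ℂ | A ≠ 0 ∧ ∀ j : ℕ, 1 ≤ j → j ≤ 4 * m + 1 →
          A ^ (2 * j : ℤ) ≠ A ^ (-(2 * j : ℤ))})
      (nhds ((↑(∑ k ∈ Finset.range (m + 1), (s m / (s k * s (m - k))) ^ 4) : ℂ))) := by
  set N := 2 * m + 1
  set ζ := exp (↑(Real.pi / (2 * N)) * I)
  have hζ : exp (Real.pi * I / (2 * (2 * m + 1))) = ζ := by
    congr 1; push_cast [N]; ring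
  have hs' (j : ℕ) (hj : j ≤ m) : s j = sinRatioProd N j := by
    rw [hs j hj]; push_cast [sinRatioProd, sinRatio, N]; rfl
  have hsum : ∑ k ∈ range (m + 1), (s m / (s k * s (m - k))) ^ 4 =
      ∑ k ∈ range (m + 1), (sinRatioProd N m / (sinRatioProd N k * sinRatioProd N (m - k))) ^ 4 :=
    sum_congr rfl fun k hk => by
      rw [hs' m le_rfl, hs' k (Nat.lt_succ_iff.1 (mem_range.1 hk)), hs' (m - k) (Nat.sub_le m k)]
  have h2 : ζ ^ (2 : ℤ) ≠ ζ ^ (-2 : ℤ) := zpow_two_ne_zpow_neg_two_of_qint_ne_zero (j := 1)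
    (by rw [qint_exp_pi_div]; exact ofReal_ne_zero.2 (sinRatio_pos one_pos (by omega)).ne')
  have hfact (j : ℕ) (hj : j ≤ 2 * m) : qfact ζ j ≠ 0 := by
    rw [qfact_exp_pi_div]; exact ofReal_ne_zero.2 (sinRatioProd_pos (by omega)).ne'
  rw [hζ, hsum, ← sixjReduced_exp_pi_div]
  refine ((continuousAt_sixjReduced (exp_ne_zero _) h2 hfact).tendsto.mono_left
    nhdsWithin_le_nhds).congr' ?_
  filter_upwards [self_mem_nhdsWithin] with A ⟨_, hA⟩
  have hqN : qint A N ≠ 0 :=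
    qint_ne_zero (by simpa only [Nat.cast_one, mul_one] using hA 1 le_rfl (by omega))
      (hA N (by omega) (by omega))
  change sixjReduced m A = sixj m A / qint A N
  rw [sixj_eq_qint_mul_sixjReduced, mul_div_cancel_left₀ _ hqN]
end

section
/- Fix natural numbers t, r and an integer θ. For an odd integer N = 2m+1 ≥ 3 define s_N(j) = ∏_{i=1}^{j} (sin(iπ/N)/sin(π/N)) for 0 ≤ j ≤ m, define sixj_N = Σ_{k=0}^{m} ( s_N(m)/(s_N(k)·s_N(m−k)) )^4, a positive real number, and define φ_N = (−1)^{(N−1)/2} · exp( ((N^2−1)/(4N)) · πi ) ∈ ℂ. Then the sequence n ↦ (2π/(2n+1)) · log| φ_{2n+1}^{θ} · (2n+1)^{r} · sixj_{2n+1}^{t+1} | converges, as n → ∞, to −16·(t+1)·∫_{0}^{π/4} log(2 sin u) du. -/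
open Real Filter Complex

/-- For odd `N = 2m+1`, `s_N(j) = ∏_{i=1}^{j} sin(iπ/N)/sin(π/N)`. -/
noncomputable def sN (m j : ℕ) : ℝ :=
  ∏ i ∈ Finset.Icc 1 j,
    Real.sin (i * Real.pi / (2 * m + 1)) / Real.sin (Real.pi / (2 * m + 1))

/-- For odd `N = 2m+1`, `sixj_N = Σ_{k=0}^{m} ( s_N(m)/(s_N(k)·s_N(m−k)) )^4`. -/
noncomputable def sixjN (m : ℕ) : ℝ :=
  ∑ k ∈ Finset.range (m + 1), (sN m m / (sN m k * sN m (m - k))) ^ 4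

/-- The half-twist factor `φ_N = (−1)^{(N−1)/2}·exp(((N²−1)/(4N))·πi)` for `N = 2n+1`. -/
noncomputable def phiN (n : ℕ) : ℂ :=
  (-1 : ℂ) ^ n *
    Complex.exp ((((2 * n + 1 : ℂ) ^ 2 - 1) / (4 * (2 * n + 1 : ℂ))) * Real.pi * Complex.I)

/-!
Write `h = π / (2n+1)`. The summands of `sixj` are the fourth powers of the sine binomials
`q_k = s(n) / (s(k) s(n-k))`, which are unimodal in `k` with maximum at `k = n/2`; hence
`log sixj = 4 log q_{n/2} + O(log n)`. Since `h log q_{n/2}` is a difference of right Riemann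
sums of `log (2 sin)`, which increases on `(0, π/2]`, it tends to
`∫₀^{π/2} - 2 ∫₀^{π/4} = -2 ∫₀^{π/4}` (the integral of `log (2 sin)` over `[0, π/2]` vanishes).
Finally `|φ| = 1`, and `N^r` only contributes `O(log N / N)`.
-/

open MeasureTheory Set Topology

section RiemannSum

variable {f : ℝ → ℝ} {a h : ℝ} {n : ℕ}

theorem add_natCast_mul_mem_Icc (hh : 0 ≤ h) {k : ℕ} (hk : k ≤ n) :
    a + k * h ∈ Icc a (a + n * h) := by
  have : (k : ℝ) ≤ n := by exact_mod_cast hk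
  constructor <;> nlinarith

theorem IntervalIntegrable.of_add_natCast_mul (hh : 0 ≤ h)
    (hfi : IntervalIntegrable f volume a (a + n * h)) {k : ℕ} (hk : k < n) :
    IntervalIntegrable f volume (a + k * h) (a + (k + 1 : ℕ) * h) := by
  refine hfi.mono_set (uIcc_subset_uIcc ?_ ?_) <;>
    exact Icc_subset_uIcc (add_natCast_mul_mem_Icc hh (by omega))

theorem MonotoneOn.integral_le_mul_sum_right (hh : 0 ≤ h)
    (hf : MonotoneOn f (Ioc a (a + n * h))) (hfi : IntervalIntegrable f volume a (a + n * h)) :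
    ∫ x in a..a + n * h, f x ≤ h * ∑ i ∈ Finset.range n, f (a + (i + 1) * h) := by
  have hsum := intervalIntegral.sum_integral_adjacent_intervals
    (a := fun k : ℕ => a + k * h) (fun k hk => hfi.of_add_natCast_mul hh hk)
  simp only [Nat.cast_zero, zero_mul, add_zero] at hsum
  rw [← hsum, Finset.mul_sum]
  gcongr with i hi
  have hi := Finset.mem_range.1 hi
  have hl := add_natCast_mul_mem_Icc (a := a) hh hi.le
  have hr := add_natCast_mul_mem_Icc (a := a) hh (Nat.succ_le_of_lt hi)
  calc ∫ x in a + i * h..a + (i + 1 : ℕ) * h, f x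
      ≤ ∫ _ in a + i * h..a + (i + 1 : ℕ) * h, f (a + (i + 1) * h) := by
        refine intervalIntegral.integral_mono_on_of_le_Ioo (by push_cast; linarith)
          (hfi.of_add_natCast_mul hh hi) intervalIntegrable_const fun x hx => ?_
        push_cast at hr hx
        exact hf ⟨by linarith [hx.1, hl.1], by linarith [hx.2, hr.2]⟩
          ⟨by linarith [hx.1, hx.2, hl.1], hr.2⟩ hx.2.le
    _ = h * f (a + (i + 1) * h) := by
        rw [intervalIntegral.integral_const, smul_eq_mul]; push_cast; ring

theorem MonotoneOn.mul_sum_left_le_integral (hh : 0 ≤ h)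
    (hf : MonotoneOn f (Ico a (a + n * h))) (hfi : IntervalIntegrable f volume a (a + n * h)) :
    h * ∑ i ∈ Finset.range n, f (a + i * h) ≤ ∫ x in a..a + n * h, f x := by
  have hsum := intervalIntegral.sum_integral_adjacent_intervals
    (a := fun k : ℕ => a + k * h) (fun k hk => hfi.of_add_natCast_mul hh hk)
  simp only [Nat.cast_zero, zero_mul, add_zero] at hsum
  rw [← hsum, Finset.mul_sum]
  gcongr with i hi
  have hi := Finset.mem_range.1 hi
  have hl := add_natCast_mul_mem_Icc (a := a) hh hi.le
  have hr := add_natCast_mul_mem_Icc (a := a) hh (Nat.succ_le_of_lt hi)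
  calc h * f (a + i * h) = ∫ _ in a + i * h..a + (i + 1 : ℕ) * h, f (a + i * h) := by
        rw [intervalIntegral.integral_const, smul_eq_mul]; push_cast; ring
    _ ≤ ∫ x in a + i * h..a + (i + 1 : ℕ) * h, f x := by
        refine intervalIntegral.integral_mono_on_of_le_Ioo (by push_cast; linarith)
          intervalIntegrable_const (hfi.of_add_natCast_mul hh hi) fun x hx => ?_
        push_cast at hr hx
        exact hf ⟨hl.1, by linarith [hx.1, hx.2, hr.2]⟩
          ⟨by linarith [hx.1, hl.1], by linarith [hx.2, hr.2]⟩ hx.1.le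

theorem MonotoneOn.mul_sum_le_integral_sub_add {c : ℝ} {j : ℕ} (hh : 0 < h) (hj : 0 < j)
    (hjc : j * h ≤ c) (hf : MonotoneOn f (Ioc 0 c)) (hfi : IntervalIntegrable f volume 0 c) :
    h * ∑ i ∈ Finset.range j, f ((i + 1) * h)
      ≤ (∫ u in 0..j * h, f u) - (∫ u in 0..h, f u) + h * f c := by
  obtain ⟨k, rfl⟩ := Nat.exists_eq_add_one.2 hj
  push_cast at hjc ⊢
  have hk : (0 : ℝ) ≤ k := k.cast_nonneg
  have hkh : h + k * h = (k + 1) * h := by ring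
  have hkpos : 0 < ((k : ℝ) + 1) * h := by positivity
  have hint : ∀ {x y}, x ∈ Icc 0 c → y ∈ Icc 0 c → IntervalIntegrable f volume x y :=
    fun hx hy => hfi.mono_set (uIcc_subset_uIcc (Icc_subset_uIcc hx) (Icc_subset_uIcc hy))
  have hsum := MonotoneOn.mul_sum_left_le_integral (a := h) (n := k) hh.le
    (hf.mono fun y hy => ⟨by linarith [hy.1], by linarith [hy.2]⟩)
    (hkh ▸ hint ⟨hh.le, by nlinarith⟩ ⟨hkpos.le, hjc⟩)
  simp only [hkh, fun i : ℕ => show h + i * h = (i + 1) * h by ring] at hsum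
  have hfc : f ((k + 1) * h) ≤ f c := hf ⟨hkpos, hjc⟩ ⟨hkpos.trans_le hjc, le_rfl⟩ hjc
  have h0 : (0 : ℝ) ∈ Icc 0 c := ⟨le_rfl, hkpos.le.trans hjc⟩
  rw [intervalIntegral.integral_interval_sub_left (hint h0 ⟨hkpos.le, hjc⟩)
    (hint h0 ⟨hh.le, by nlinarith⟩), Finset.sum_range_succ, mul_add]
  linarith [mul_le_mul_of_nonneg_left hfc hh.le]

end RiemannSum

theorem tendsto_mul_sum_of_monotoneOn {f : ℝ → ℝ} {c x : ℝ} (hf : MonotoneOn f (Ioc 0 c))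
    (hfi : IntervalIntegrable f volume 0 c) {h : ℕ → ℝ} {j : ℕ → ℕ} (hpos : ∀ n, 0 < h n)
    (hh : Tendsto h atTop (𝓝 0)) (hjc : ∀ n, j n * h n ≤ c) (hx : 0 < x)
    (hj : Tendsto (fun n => j n * h n) atTop (𝓝 x)) :
    Tendsto (fun n => h n * ∑ i ∈ Finset.range (j n), f ((i + 1) * h n)) atTop
      (𝓝 (∫ u in 0..x, f u)) := by
  have hxc : x ≤ c := le_of_tendsto' hj hjc
  have hjmem : ∀ n, j n * h n ∈ Icc 0 c := fun n => ⟨by have := hpos n; positivity, hjc n⟩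
  have hF : ContinuousOn (fun b => ∫ u in 0..b, f u) (Icc 0 c) := by
    simpa [uIcc_of_le (hx.le.trans hxc)] using
      intervalIntegral.continuousOn_primitive_interval' hfi left_mem_uIcc
  have hFlim : ∀ {g : ℕ → ℝ} {y : ℝ}, y ∈ Icc 0 c → (∀ᶠ n in atTop, g n ∈ Icc 0 c) →
      Tendsto g atTop (𝓝 y) →
      Tendsto (fun n => ∫ u in 0..g n, f u) atTop (𝓝 (∫ u in 0..y, f u)) :=
    fun hy hg hlim => (hF _ hy).tendsto.comp (tendsto_nhdsWithin_iff.2 ⟨hlim, hg⟩)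
  have hlower := hFlim ⟨hx.le, hxc⟩ (Eventually.of_forall hjmem) hj
  have hupper : Tendsto (fun n => (∫ u in 0..j n * h n, f u) - (∫ u in 0..h n, f u)
      + h n * f c) atTop (𝓝 (∫ u in 0..x, f u)) := by
    have hhc : ∀ᶠ n in atTop, h n ∈ Icc 0 c :=
      (hh.eventually (gt_mem_nhds (hx.trans_le hxc))).mono fun n hn => ⟨(hpos n).le, hn.le⟩
    have h0 : Tendsto (fun n => ∫ u in 0..h n, f u) atTop (𝓝 (∫ u in 0..0, f u)) :=
      hFlim ⟨le_rfl, (hx.trans_le hxc).le⟩ hhc hh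
    simpa using (hlower.sub h0).add (hh.mul_const (f c))
  refine tendsto_of_tendsto_of_tendsto_of_le_of_le' hlower hupper
    (Eventually.of_forall fun n => ?_) ?_
  · simpa using MonotoneOn.integral_le_mul_sum_right (a := 0) (hpos n).le
      (by simpa using hf.mono (Ioc_subset_Ioc_right (hjc n)))
      (by simpa using hfi.mono_set (uIcc_subset_uIcc left_mem_uIcc (Icc_subset_uIcc (hjmem n))))
  · filter_upwards [hj.eventually (lt_mem_nhds hx)] with n hn
    refine hf.mul_sum_le_integral_sub_add (hpos n) (Nat.pos_of_ne_zero fun h0 => ?_) (hjc n) hfi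
    simp [h0] at hn

noncomputable def logTwoSin (u : ℝ) : ℝ := Real.log (2 * Real.sin u)

theorem logTwoSin_monotoneOn : MonotoneOn logTwoSin (Ioc 0 (π / 2)) := fun x hx y hy hxy =>
  Real.log_le_log (by linarith [sin_pos_of_pos_of_lt_pi hx.1 (by linarith [hx.2, pi_pos])])
    (by linarith [sin_le_sin_of_le_of_le_pi_div_two (by linarith [hx.1, pi_pos]) hy.2 hxy])

theorem intervalIntegrable_logTwoSin (a b : ℝ) : IntervalIntegrable logTwoSin volume a b :=
  (analyticOnNhd_const.mul Real.analyticOnNhd_sin).meromorphicOn.intervalIntegrable_log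

theorem integral_logTwoSin_zero_pi_div_two : ∫ u in 0..π / 2, logTwoSin u = 0 := by
  have hsplit :
      ∫ u in 0..π / 2, logTwoSin u = ∫ u in 0..π / 2, (Real.log 2 + Real.log (sin u)) := by
    refine intervalIntegral.integral_congr_ae (ae_of_all _ fun u hu => ?_)
    rw [uIoc_of_le (by positivity)] at hu
    exact Real.log_mul two_ne_zero (sin_pos_of_pos_of_lt_pi hu.1 (by linarith [hu.2, pi_pos])).ne'
  have hlog : IntervalIntegrable (fun u => Real.log (Real.sin u)) volume 0 (π / 2) :=
    intervalIntegrable_log_sin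
  rw [hsplit, intervalIntegral.integral_add intervalIntegrable_const hlog,
    intervalIntegral.integral_const, integral_log_sin_zero_pi_div_two, smul_eq_mul]
  ring

noncomputable def mesh (n : ℕ) : ℝ := π / (2 * n + 1)

theorem mesh_pos (n : ℕ) : 0 < mesh n := by unfold mesh; positivity

theorem mul_mesh_lt {n : ℕ} {x : ℝ} (hx : x ≤ n) : x * mesh n < π / 2 := by
  unfold mesh
  rw [← mul_div_assoc, div_lt_div_iff₀ (by positivity) two_pos]
  nlinarith [pi_pos]

theorem sin_succ_mul_mesh_pos {n i : ℕ} (hi : i < n) : 0 < Real.sin ((i + 1) * mesh n) :=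
  sin_pos_of_pos_of_lt_pi (mul_pos (by positivity) (mesh_pos n))
    (by linarith [mul_mesh_lt (n := n) (x := i + 1) (by exact_mod_cast hi), pi_pos])

theorem sin_mesh_pos {n : ℕ} (hn : 0 < n) : 0 < Real.sin (mesh n) := by
  simpa using sin_succ_mul_mesh_pos hn

theorem tendsto_mesh : Tendsto mesh atTop (𝓝 0) :=
  tendsto_const_nhds.div_atTop <| tendsto_atTop_add_const_right _ _ <|
    tendsto_natCast_atTop_atTop.const_mul_atTop two_pos

theorem tendsto_natCast_mul_mesh {j : ℕ → ℕ} {α : ℝ} (hj : ∀ n, |(j n : ℝ) - α * n| ≤ 1) :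
    Tendsto (fun n => j n * mesh n) atTop (𝓝 (α * (π / 2))) := by
  have hdev : Tendsto (fun n => ((j n : ℝ) - α * n) * mesh n) atTop (𝓝 0) :=
    squeeze_zero_norm (fun n => by
      rw [norm_mul, Real.norm_eq_abs, Real.norm_eq_abs, abs_of_pos (mesh_pos n)]
      exact mul_le_of_le_one_left (mesh_pos n).le (hj n)) tendsto_mesh
  have hmain : Tendsto (fun n => α * (π / 2 - mesh n / 2)) atTop (𝓝 (α * (π / 2))) := by
    simpa using (tendsto_const_nhds.sub (tendsto_mesh.div_const 2)).const_mul α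
  rw [← zero_add (α * (π / 2))]
  refine (hdev.add hmain).congr fun n => ?_
  have : (2 * n + 1 : ℝ) ≠ 0 := by positivity
  simp only [mesh]
  field_simp
  ring

noncomputable def logSinSum (n j : ℕ) : ℝ := ∑ i ∈ Finset.range j, logTwoSin ((i + 1) * mesh n)

theorem sN_eq_prod_range (n j : ℕ) :
    sN n j = ∏ i ∈ Finset.range j, Real.sin ((i + 1) * mesh n) / Real.sin (mesh n) := by
  rw [sN, ← Finset.Ico_add_one_right_eq_Icc, Finset.prod_Ico_eq_prod_range, Nat.add_sub_cancel]
  refine Finset.prod_congr rfl fun i _ => ?_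
  simp only [mesh, mul_div_assoc]
  push_cast
  ring_nf

theorem log_sN {n j : ℕ} (hj : j ≤ n) :
    Real.log (sN n j) = logSinSum n j - j * logTwoSin (mesh n) := by
  have hpos : ∀ i ∈ Finset.range j, 0 < Real.sin ((i + 1) * mesh n) ∧ 0 < Real.sin (mesh n) :=
    fun i hi => have hi : i < n := (Finset.mem_range.1 hi).trans_le hj
      ⟨sin_succ_mul_mesh_pos hi, sin_mesh_pos (by omega)⟩
  have hconst : (j : ℝ) * logTwoSin (mesh n) = ∑ _i ∈ Finset.range j, logTwoSin (mesh n) := by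
    simp
  rw [sN_eq_prod_range, Real.log_prod fun i hi => (div_pos (hpos i hi).1 (hpos i hi).2).ne',
    logSinSum, hconst, ← Finset.sum_sub_distrib]
  refine Finset.sum_congr rfl fun i hi => ?_
  rw [← mul_div_mul_left _ _ (two_ne_zero' ℝ),
    Real.log_div (by linarith [(hpos i hi).1]) (by linarith [(hpos i hi).2])]
  rfl

/-- The paper's quantum binomial coefficient `binom_q(n, k)` at `A = exp(πi/(2N))`, `N = 2n+1`,
written with the quantum integers `[i] = sin(iπ/N) / sin(π/N)`. -/
noncomputable def sinBinom (n k : ℕ) : ℝ := sN n n / (sN n k * sN n (n - k))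

theorem sN_pos {n j : ℕ} (hj : j ≤ n) : 0 < sN n j := by
  rw [sN_eq_prod_range]
  refine Finset.prod_pos fun i hi => ?_
  have hi : i < n := (Finset.mem_range.1 hi).trans_le hj
  exact div_pos (sin_succ_mul_mesh_pos hi) (sin_mesh_pos (by omega))

theorem sinBinom_pos {n k : ℕ} (hk : k ≤ n) : 0 < sinBinom n k :=
  div_pos (sN_pos le_rfl) (mul_pos (sN_pos hk) (sN_pos (Nat.sub_le n k)))

theorem log_sinBinom {n k : ℕ} (hk : k ≤ n) :
    Real.log (sinBinom n k) = logSinSum n n - logSinSum n k - logSinSum n (n - k) := by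
  have hk' := sN_pos hk
  have hnk := sN_pos (Nat.sub_le n k)
  rw [sinBinom, Real.log_div (sN_pos le_rfl).ne' (mul_pos hk' hnk).ne',
    Real.log_mul hk'.ne' hnk.ne', log_sN le_rfl, log_sN hk, log_sN (Nat.sub_le n k),
    Nat.cast_sub hk]
  ring

theorem sinBinom_le_succ {n k : ℕ} (hk : 2 * k < n) : sinBinom n k ≤ sinBinom n (k + 1) := by
  rw [← Real.log_le_log_iff (sinBinom_pos (by omega)) (sinBinom_pos (by omega)),
    log_sinBinom (by omega), log_sinBinom (by omega), show n - k = n - (k + 1) + 1 by omega]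
  -- the log-ratio of consecutive terms is `logTwoSin ((n-k) * mesh n) - logTwoSin ((k+1) * mesh n)`
  simp only [logSinSum, Finset.sum_range_succ]
  have hk1 : (k : ℝ) + 1 ≤ ((n - (k + 1) : ℕ) : ℝ) + 1 := by
    exact_mod_cast (by omega : k + 1 ≤ n - (k + 1) + 1)
  have hn : ((n - (k + 1) : ℕ) : ℝ) + 1 ≤ n := by exact_mod_cast (by omega : n - (k + 1) + 1 ≤ n)
  have := logTwoSin_monotoneOn
    ⟨mul_pos (by positivity) (mesh_pos n), (mul_mesh_lt (hk1.trans hn)).le⟩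
    ⟨mul_pos (by positivity) (mesh_pos n), (mul_mesh_lt hn).le⟩
    (mul_le_mul_of_nonneg_right hk1 (mesh_pos n).le)
  linarith

theorem sinBinom_symm {n k : ℕ} (hk : k ≤ n) : sinBinom n (n - k) = sinBinom n k := by
  rw [sinBinom, sinBinom, Nat.sub_sub_self hk, mul_comm]

theorem sinBinom_le_mid {n k : ℕ} (hk : k ≤ n) : sinBinom n k ≤ sinBinom n (n / 2) := by
  have hmono : MonotoneOn (sinBinom n) (Iic (n / 2)) :=
    monotoneOn_of_le_succ ordConnected_Iic fun a _ _ ha => by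
      rw [Order.succ_eq_add_one] at ha ⊢
      exact sinBinom_le_succ (by simp only [mem_Iic] at ha; omega)
  rcases le_or_gt k (n / 2) with h | h
  · exact hmono h self_mem_Iic h
  · rw [← sinBinom_symm hk]
    exact hmono (by simp; omega) self_mem_Iic (by omega)

theorem sixjN_eq_sum_sinBinom (n : ℕ) : sixjN n = ∑ k ∈ Finset.range (n + 1), sinBinom n k ^ 4 :=
  rfl

theorem sinBinom_mid_pow_le_sixjN (n : ℕ) : sinBinom n (n / 2) ^ 4 ≤ sixjN n :=
  Finset.single_le_sum (f := fun k => sinBinom n k ^ 4) (fun _ _ => by positivity)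
    (Finset.mem_range.2 (by omega))

theorem sixjN_le (n : ℕ) : sixjN n ≤ (n + 1) * sinBinom n (n / 2) ^ 4 := by
  rw [sixjN_eq_sum_sinBinom]
  calc ∑ k ∈ Finset.range (n + 1), sinBinom n k ^ 4
      ≤ ∑ _k ∈ Finset.range (n + 1), sinBinom n (n / 2) ^ 4 :=
        Finset.sum_le_sum fun k hk => by
          have hk : k ≤ n := Nat.lt_succ_iff.1 (Finset.mem_range.1 hk)
          exact pow_le_pow_left₀ (sinBinom_pos hk).le (sinBinom_le_mid hk) 4
    _ = (n + 1) * sinBinom n (n / 2) ^ 4 := by simp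

theorem sixjN_pos (n : ℕ) : 0 < sixjN n :=
  (pow_pos (sinBinom_pos (Nat.div_le_self n 2)) 4).trans_le (sinBinom_mid_pow_le_sixjN n)

theorem tendsto_mesh_mul_logSinSum {j : ℕ → ℕ} {α : ℝ} (hα : 0 < α) (hjn : ∀ n, j n ≤ n)
    (hj : ∀ n, |(j n : ℝ) - α * n| ≤ 1) :
    Tendsto (fun n => mesh n * logSinSum n (j n)) atTop
      (𝓝 (∫ u in 0..α * (π / 2), logTwoSin u)) :=
  tendsto_mul_sum_of_monotoneOn logTwoSin_monotoneOn (intervalIntegrable_logTwoSin _ _) mesh_pos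
    tendsto_mesh (fun n => (mul_mesh_lt (by exact_mod_cast hjn n)).le) (by positivity)
    (tendsto_natCast_mul_mesh hj)

theorem tendsto_mesh_mul_log_sinBinom_mid :
    Tendsto (fun n => mesh n * Real.log (sinBinom n (n / 2))) atTop
      (𝓝 (-2 * ∫ u in 0..π / 4, logTwoSin u)) := by
  have hhalf : ∀ n : ℕ, 2 * ((n / 2 : ℕ) : ℝ) ≤ n ∧ (n : ℝ) ≤ 2 * (n / 2 : ℕ) + 1 :=
    fun n => ⟨by exact_mod_cast (by omega), by exact_mod_cast (by omega)⟩
  have hall := tendsto_mesh_mul_logSinSum (j := id) one_pos (fun n => le_rfl) (fun n => by simp)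
  have hlow := tendsto_mesh_mul_logSinSum (j := fun n => n / 2) one_half_pos
    (fun n => Nat.div_le_self n 2) fun n => by
      obtain ⟨h1, h2⟩ := hhalf n
      rw [abs_le]; constructor <;> linarith
  have hup := tendsto_mesh_mul_logSinSum (j := fun n => n - n / 2) one_half_pos
    (fun n => Nat.sub_le n _) fun n => by
      obtain ⟨h1, h2⟩ := hhalf n
      rw [Nat.cast_sub (Nat.div_le_self n 2), abs_le]; constructor <;> linarith
  rw [one_mul, integral_logTwoSin_zero_pi_div_two] at hall
  rw [show (1 / 2 : ℝ) * (π / 2) = π / 4 by ring] at hlow hup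
  rw [show -2 * ∫ u in 0..π / 4, logTwoSin u
    = 0 - (∫ u in 0..π / 4, logTwoSin u) - ∫ u in 0..π / 4, logTwoSin u by ring]
  refine ((hall.sub hlow).sub hup).congr fun n => ?_
  rw [log_sinBinom (Nat.div_le_self n 2), id]
  ring

theorem tendsto_mesh_mul_log {a : ℝ} (ha : 0 < a) :
    Tendsto (fun n : ℕ => mesh n * Real.log (a * n + 1)) atTop (𝓝 0) := by
  have hx : Tendsto (fun n : ℕ => a * n + 1) atTop atTop :=
    tendsto_atTop_add_const_right _ _ (tendsto_natCast_atTop_atTop.const_mul_atTop ha)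
  have h := ((Real.tendsto_pow_log_div_mul_add_atTop (2 / a) (1 - 2 / a) 1
    (by positivity)).comp hx).const_mul π
  rw [mul_zero] at h
  refine h.congr fun n => ?_
  have hden : 2 / a * (a * n + 1) + (1 - 2 / a) = 2 * n + 1 := by field_simp; ring
  simp only [Function.comp, pow_one, hden, mesh]
  ring

theorem log_sixjN_sub_mem_Icc (n : ℕ) :
    Real.log (sixjN n) - 4 * Real.log (sinBinom n (n / 2)) ∈ Icc 0 (Real.log (n + 1)) := by
  have hq := pow_pos (sinBinom_pos (Nat.div_le_self n 2)) 4
  have hlow := Real.log_le_log hq (sinBinom_mid_pow_le_sixjN n)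
  have hup := Real.log_le_log (sixjN_pos n) (sixjN_le n)
  rw [Real.log_mul (by positivity) hq.ne', Real.log_pow] at hup
  rw [Real.log_pow] at hlow
  push_cast at hlow hup
  constructor <;> linarith

theorem tendsto_mesh_mul_log_sixjN :
    Tendsto (fun n => mesh n * Real.log (sixjN n)) atTop
      (𝓝 (-8 * ∫ u in 0..π / 4, logTwoSin u)) := by
  have herr : Tendsto (fun n => mesh n * (Real.log (sixjN n) - 4 * Real.log (sinBinom n (n / 2))))
      atTop (𝓝 0) :=
    squeeze_zero (fun n => mul_nonneg (mesh_pos n).le (log_sixjN_sub_mem_Icc n).1)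
      (fun n => mul_le_mul_of_nonneg_left (log_sixjN_sub_mem_Icc n).2 (mesh_pos n).le)
      (by simpa using tendsto_mesh_mul_log one_pos)
  have h := (tendsto_mesh_mul_log_sinBinom_mid.const_mul 4).add herr
  rw [add_zero, ← mul_assoc, show (4 : ℝ) * -2 = -8 by norm_num] at h
  refine h.congr fun n => ?_
  ring

theorem norm_phiN (n : ℕ) : ‖phiN n‖ = 1 := by
  have hexp : (((2 * n + 1 : ℂ) ^ 2 - 1) / (4 * (2 * n + 1 : ℂ))) * Real.pi
      = ((((2 * n + 1 : ℝ) ^ 2 - 1) / (4 * (2 * n + 1)) * π : ℝ) : ℂ) := by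
    push_cast; ring
  rw [phiN, norm_mul, norm_pow, hexp, Complex.norm_exp_ofReal_mul_I]
  simp

/-- Part 3 of the Main Theorem (analytic content): for fixed `t r : ℕ` and `θ : ℤ`,
`(2π/(2n+1))·log| φ_{2n+1}^θ · (2n+1)^r · sixj_{2n+1}^{t+1} |` converges to
`−16·(t+1)·∫₀^{π/4} log(2 sin u) du = (2t+2)·Vol(Oct)`. -/
theorem augmented_volume_conjecture (t r : ℕ) (θ : ℤ) :
    Tendsto
      (fun n : ℕ => 2 * Real.pi / (2 * n + 1) *
        Real.log ‖
          ((phiN n) ^ θ * ((2 * n + 1 : ℕ) : ℂ) ^ r * ((sixjN n : ℂ)) ^ (t + 1))‖)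
      atTop
      (nhds (-16 * (t + 1) * ∫ u in (0:ℝ)..(Real.pi / 4), Real.log (2 * Real.sin u))) := by
  have h := ((tendsto_mesh_mul_log two_pos).const_mul (2 * (r : ℝ))).add
    (tendsto_mesh_mul_log_sixjN.const_mul (2 * ((t : ℝ) + 1)))
  rw [mul_zero, zero_add, ← mul_assoc, show 2 * ((t : ℝ) + 1) * -8 = -16 * (t + 1) by ring] at h
  refine h.congr fun n => ?_
  rw [norm_mul, norm_mul, norm_zpow, norm_phiN, one_zpow, one_mul, norm_pow, norm_pow,
    Complex.norm_natCast, Complex.norm_real, Real.norm_of_nonneg (sixjN_pos n).le,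
    Real.log_mul (by positivity) (pow_pos (sixjN_pos n) _).ne', Real.log_pow, Real.log_pow, mesh]
  push_cast
  ring
end
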